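/- arXiv:2007.08956 — 2 statements merged into one kernel-verified Lean document; each statement's English description precedes it below -/
import Mathlib

section
/- Let A be the n×n adjacency matrix of a finite simple (directed or undirected) graph with n ≥ 2 vertices. Two vertices i, j are cospectral (i.e. [Aʳ]_{ii} = [Aʳ]_{jj} for every positive integer r) if and only if [Aʳ]_{ii} = [Aʳ]_{jj} for every r with 1 ≤ r ≤ n−1. -/
open Polynomial

namespace Matrix

variable {R ι : Type*} [CommRing R] [Nontrivial R] [Fintype ι] [DecidableEq ι]

/-- By Cayley–Hamilton, `A ^ r` is the value at `A` of the remainder of `X ^ r` modulo the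
characteristic polynomial, which has degree `< card ι`. -/
theorem pow_mem_span_pow_lt_card (A : Matrix ι ι R) (r : ℕ) :
    A ^ r ∈ Submodule.span R (Set.range fun k : Fin (Fintype.card ι) => A ^ (k : ℕ)) :=
  PowerBasis.mem_span_pow'.2
    ⟨X ^ r %ₘ A.charpoly, A.charpoly_degree_eq_dim ▸ degree_modByMonic_lt _ A.charpoly_monic,
      A.pow_eq_aeval_mod_charpoly r⟩

theorem pow_apply_self_eq_of_forall_lt_card (A : Matrix ι ι R) {i j : ι}
    (h : ∀ k, 0 < k → k < Fintype.card ι → (A ^ k) i i = (A ^ k) j j) (r : ℕ) :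
    (A ^ r) i i = (A ^ r) j j := by
  have hspan : Submodule.span R (Set.range fun k : Fin (Fintype.card ι) => A ^ (k : ℕ)) ≤
      LinearMap.ker (entryLinearMap R R i i - entryLinearMap R R j j) := by
    rw [Submodule.span_le]
    rintro _ ⟨⟨k, hk⟩, rfl⟩
    rcases Nat.eq_zero_or_pos k with rfl | hk0
    · simp
    · simp [h k hk0 hk]
  simpa [sub_eq_zero] using hspan (A.pow_mem_span_pow_lt_card r)

end Matrix

theorem cospectral_iff_finitely_many_powers_general {n : ℕ}
    (A : Matrix (Fin n) (Fin n) ℂ)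
    (i j : Fin n) :
    (∀ r : ℕ, 0 < r → (A ^ r) i i = (A ^ r) j j) ↔
      (∀ r : ℕ, 1 ≤ r → r ≤ n - 1 → (A ^ r) i i = (A ^ r) j j) :=
  ⟨fun h r hr _ => h r hr, fun h r _ =>
    A.pow_apply_self_eq_of_forall_lt_card
      (fun k hk hkn => h k hk (by rw [Fintype.card_fin] at hkn; omega)) r⟩

/-- Let `A` be the `n × n` adjacency matrix of a finite simple (directed or
undirected) graph with `n ≥ 2` vertices, i.e. a 0-1 matrix. Two vertices `i, j` are cospectral
(`[Aʳ]_{ii} = [Aʳ]_{jj}` for every positive integer `r`) if and only if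
`[Aʳ]_{ii} = [Aʳ]_{jj}` for every `r` with `1 ≤ r ≤ n − 1`. -/
theorem cospectral_iff_finitely_many_powers {n : ℕ} (hn : 2 ≤ n)
    (A : Matrix (Fin n) (Fin n) ℂ)
    (hA01 : ∀ i j, A i j = 0 ∨ A i j = 1)
    (i j : Fin n) :
    (∀ r : ℕ, 0 < r → (A ^ r) i i = (A ^ r) j j) ↔
      (∀ r : ℕ, 1 ≤ r → r ≤ n - 1 → (A ^ r) i i = (A ^ r) j j) :=
  cospectral_iff_finitely_many_powers_general A i j
end

section
/- Let G be a finite simple undirected graph with adjacency matrix A, and suppose G is not walk-regular. Then the set {β ∈ ℝ : G is β-subgraph regular} is finite. -/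
/-!
Diagonalise `A = U D Uᵀ` with `U` orthogonal. Then `(Aʳ)ᵢᵢ = ∑ₗ Uᵢₗ² λₗʳ` and
`(e^{βA})ᵢᵢ = ∑ₗ Uᵢₗ² e^{βλₗ}`, so for two vertices `i, j` with `(Aʳ)ᵢᵢ ≠ (Aʳ)ⱼⱼ` every
`β`-subgraph regular `β` is a zero of the exponential sum `F(β) = ∑ₗ (Uᵢₗ² - Uⱼₗ²) e^{βλₗ}`,
whose `r`-th moment `∑ₗ (Uᵢₗ² - Uⱼₗ²) λₗʳ` is nonzero. After grouping equal exponents, some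
coefficient is nonzero, so the terms with the largest (smallest) such exponent dominate as
`β → ∞` (`β → -∞`). So the zeros of the analytic function `F` lie in a compact set, where they
are isolated, hence finitely many.
-/

open Matrix Finset Filter Topology

/-- The matrix exponential, given by the convergent series `∑_{k ≥ 0} M^k / k!`. -/
noncomputable def matrixExp {n : ℕ} (M : Matrix (Fin n) (Fin n) ℝ) : Matrix (Fin n) (Fin n) ℝ :=
  ∑' k : ℕ, (k.factorial : ℝ)⁻¹ • M ^ k

theorem matrixExp_eq_exp {n : ℕ} (M : Matrix (Fin n) (Fin n) ℝ) :
    matrixExp M = NormedSpace.exp M :=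
  (congrFun (NormedSpace.exp_eq_tsum ℝ) M).symm

theorem Matrix.mul_diagonal_mul_star_apply_self {m : Type*} [Fintype m] [DecidableEq m]
    (U : Matrix m m ℝ) (d : m → ℝ) (i : m) :
    (U * diagonal d * star U) i i = ∑ l, U i l ^ 2 * d l := by
  rw [mul_apply]
  simp only [mul_diagonal, star_apply, star_trivial]
  exact sum_congr rfl fun l _ => by ring

namespace Matrix.IsHermitian

variable {m : Type*} [Fintype m] [DecidableEq m] {A : Matrix m m ℝ} (hA : A.IsHermitian)

theorem eq_conjStarAlgAut_diagonal :
    A = Unitary.conjStarAlgAut ℝ _ hA.eigenvectorUnitary (diagonal hA.eigenvalues) := by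
  simpa using hA.spectral_theorem

theorem pow_eq_conjStarAlgAut_diagonal (k : ℕ) :
    A ^ k = Unitary.conjStarAlgAut ℝ _ hA.eigenvectorUnitary (diagonal (hA.eigenvalues ^ k)) := by
  conv_lhs => rw [hA.eq_conjStarAlgAut_diagonal]
  rw [← map_pow, diagonal_pow]

theorem exp_smul_eq_conjStarAlgAut_diagonal (β : ℝ) :
    NormedSpace.exp (β • A) = Unitary.conjStarAlgAut ℝ _ hA.eigenvectorUnitary
      (diagonal fun l => Real.exp (β * hA.eigenvalues l)) := by
  conv_lhs => rw [hA.eq_conjStarAlgAut_diagonal, ← map_smul, ← diagonal_smul]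
  set U := hA.eigenvectorUnitary
  have hU : (U : Matrix m m ℝ) = Unitary.toUnits U := rfl
  have hU' : star (U : Matrix m m ℝ) = ↑(Unitary.toUnits U)⁻¹ := rfl
  rw [Unitary.conjStarAlgAut_apply, Unitary.conjStarAlgAut_apply, hU', hU,
    Matrix.exp_units_conj, exp_diagonal]
  congr 3
  funext l
  simp [Real.exp_eq_exp_ℝ]

theorem pow_apply_self (k : ℕ) (i : m) :
    (A ^ k) i i = ∑ l, (hA.eigenvectorUnitary : Matrix m m ℝ) i l ^ 2 * hA.eigenvalues l ^ k := by
  rw [hA.pow_eq_conjStarAlgAut_diagonal, Unitary.conjStarAlgAut_apply,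
    mul_diagonal_mul_star_apply_self]
  rfl

theorem exp_smul_apply_self (β : ℝ) (i : m) :
    NormedSpace.exp (β • A) i i =
      ∑ l, (hA.eigenvectorUnitary : Matrix m m ℝ) i l ^ 2 * Real.exp (β * hA.eigenvalues l) := by
  rw [hA.exp_smul_eq_conjStarAlgAut_diagonal, Unitary.conjStarAlgAut_apply,
    mul_diagonal_mul_star_apply_self]

end Matrix.IsHermitian

theorem Finset.sum_mul_comp_eq_sum_image {ι α R : Type*} [Fintype ι] [DecidableEq α]
    [CommSemiring R] (c : ι → R) (μ : ι → α) (g : α → R) :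
    ∑ l, c l * g (μ l) = ∑ t ∈ univ.image μ, (∑ l with μ l = t, c l) * g t := by
  rw [← sum_fiberwise_of_maps_to fun l _ => mem_image_of_mem μ (mem_univ l)]
  refine sum_congr rfl fun t _ => ?_
  rw [sum_mul]
  exact sum_congr rfl fun l hl => by rw [(mem_filter.mp hl).2]

theorem tendsto_sum_mul_exp_mul_exp_neg_atTop (s : Finset ℝ) (C : ℝ → ℝ) {t₀ : ℝ}
    (ht₀ : t₀ ∈ s) (hmax : ∀ t ∈ s, C t ≠ 0 → t ≤ t₀) :
    Tendsto (fun β => (∑ t ∈ s, C t * Real.exp (β * t)) * Real.exp (-(β * t₀))) atTop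
      (𝓝 (C t₀)) := by
  have hterm : ∀ t ∈ s, Tendsto (fun β => C t * Real.exp (β * (t - t₀))) atTop
      (𝓝 (if t = t₀ then C t else 0)) := by
    intro t ht
    split_ifs with h
    · simp [h]
    by_cases hC : C t = 0
    · simp [hC]
    have hlt : t - t₀ < 0 := sub_neg.mpr ((hmax t ht hC).lt_of_ne h)
    simpa using (Real.tendsto_exp_atBot.comp
      (tendsto_id.atTop_mul_const_of_neg hlt)).const_mul (C t)
  have hsum := tendsto_finsetSum s hterm
  rw [sum_ite_eq' s t₀, if_pos ht₀] at hsum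
  refine hsum.congr fun β => ?_
  rw [sum_mul]
  refine sum_congr rfl fun t _ => ?_
  rw [mul_assoc, ← Real.exp_add]
  ring_nf

theorem eventually_sum_mul_exp_ne_zero_atTop (s : Finset ℝ) (C : ℝ → ℝ)
    (h : ∃ t ∈ s, C t ≠ 0) : ∀ᶠ β in atTop, ∑ t ∈ s, C t * Real.exp (β * t) ≠ 0 := by
  set S := s.filter (C · ≠ 0)
  have hS : S.Nonempty := by simpa [S, Finset.Nonempty] using h
  have ht₀ := mem_filter.mp (S.max'_mem hS)
  have hlim := tendsto_sum_mul_exp_mul_exp_neg_atTop s C ht₀.1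
    fun t ht hC => S.le_max' t (mem_filter.mpr ⟨ht, hC⟩)
  exact (hlim.eventually_ne ht₀.2).mono fun β hβ h0 => hβ (by rw [h0, zero_mul])

theorem eventually_sum_mul_exp_ne_zero_atTop_of_moment {ι : Type*} [Fintype ι]
    (c μ : ι → ℝ) {r : ℕ} (hr : ∑ l, c l * μ l ^ r ≠ 0) :
    ∀ᶠ β in atTop, ∑ l, c l * Real.exp (β * μ l) ≠ 0 := by
  classical
  simp only [fun β : ℝ => sum_mul_comp_eq_sum_image c μ fun t => Real.exp (β * t)]
  rw [sum_mul_comp_eq_sum_image c μ (· ^ r)] at hr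
  obtain ⟨t, ht, hCt⟩ := exists_ne_zero_of_sum_ne_zero hr
  exact eventually_sum_mul_exp_ne_zero_atTop _ _ ⟨t, ht, left_ne_zero_of_mul hCt⟩

theorem eventually_sum_mul_exp_ne_zero_atBot_of_moment {ι : Type*} [Fintype ι]
    (c μ : ι → ℝ) {r : ℕ} (hr : ∑ l, c l * μ l ^ r ≠ 0) :
    ∀ᶠ β in atBot, ∑ l, c l * Real.exp (β * μ l) ≠ 0 := by
  have hr' : ∑ l, c l * (-μ l) ^ r ≠ 0 := by
    have hneg : ∑ l, c l * (-μ l) ^ r = (-1) ^ r * ∑ l, c l * μ l ^ r := by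
      rw [mul_sum]
      exact sum_congr rfl fun l _ => by rw [neg_pow]; ring
    rw [hneg]
    exact mul_ne_zero (pow_ne_zero _ (by norm_num)) hr
  simpa using tendsto_neg_atBot_atTop.eventually
    (eventually_sum_mul_exp_ne_zero_atTop_of_moment c (-μ) hr')

theorem AnalyticOnNhd.finite_setOf_eq_zero {𝕜 E : Type*} [NontriviallyNormedField 𝕜]
    [ConnectedSpace 𝕜] [NormedAddCommGroup E] [NormedSpace 𝕜 E] {f : 𝕜 → E}
    (hf : AnalyticOnNhd 𝕜 f Set.univ) (h : ∀ᶠ x in cocompact 𝕜, f x ≠ 0) :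
    {x | f x = 0}.Finite := by
  obtain ⟨x, hx⟩ := h.exists
  obtain ⟨K, hK, hKf⟩ := mem_cocompact.mp h
  have hcod := codiscreteWithin_mono (Set.subset_univ K) (hf.preimage_zero_mem_codiscrete hx)
  refine (hK.finite_sdiff_of_mem_codiscreteWithin hcod).subset fun y hy => ⟨?_, ?_⟩
  · by_contra hyK
    exact hKf hyK hy
  · simpa using hy

theorem finite_setOf_sum_mul_exp_eq_zero {ι : Type*} [Fintype ι]
    (c μ : ι → ℝ) {r : ℕ} (hr : ∑ l, c l * μ l ^ r ≠ 0) :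
    {β : ℝ | ∑ l, c l * Real.exp (β * μ l) = 0}.Finite := by
  refine AnalyticOnNhd.finite_setOf_eq_zero (fun _ _ => by fun_prop) ?_
  rw [cocompact_eq_atBot_atTop, eventually_sup]
  exact ⟨eventually_sum_mul_exp_ne_zero_atBot_of_moment c μ hr,
    eventually_sum_mul_exp_ne_zero_atTop_of_moment c μ hr⟩

/-- Let `G` be a finite simple undirected graph with adjacency matrix `A`,
and suppose `G` is not walk-regular. Then the set of real numbers `β` for which `G` is
`β`-subgraph regular is finite. -/
theorem non_walk_regular_finitely_many_regular_beta {n : ℕ}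
    (G : SimpleGraph (Fin n)) [DecidableRel G.Adj]
    (A : Matrix (Fin n) (Fin n) ℝ) (hA : A = G.adjMatrix ℝ)
    (hnwr : ¬ ∀ (i j : Fin n) (r : ℕ), 0 < r → (A ^ r) i i = (A ^ r) j j) :
    {β : ℝ | ∀ i j : Fin n, matrixExp (β • A) i i = matrixExp (β • A) j j}.Finite := by
  obtain ⟨i, j, r, -, hr⟩ : ∃ i j r, 0 < r ∧ (A ^ r) i i ≠ (A ^ r) j j := by
    simpa using hnwr
  have hH : A.IsHermitian := by
    rw [hA, IsHermitian, conjTranspose_eq_transpose_of_trivial]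
    exact G.isSymm_adjMatrix
  set U := (hH.eigenvectorUnitary : Matrix (Fin n) (Fin n) ℝ)
  have hdiff : ∀ f : ℝ → ℝ, ∑ l, U i l ^ 2 * f (hH.eigenvalues l) -
      ∑ l, U j l ^ 2 * f (hH.eigenvalues l) =
      ∑ l, (U i l ^ 2 - U j l ^ 2) * f (hH.eigenvalues l) := fun f => by
    simp only [sub_mul, sum_sub_distrib]
  have hmoment : ∑ l, (U i l ^ 2 - U j l ^ 2) * hH.eigenvalues l ^ r ≠ 0 := by
    rw [← hdiff (· ^ r), ← hH.pow_apply_self, ← hH.pow_apply_self]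
    exact sub_ne_zero.mpr hr
  refine (finite_setOf_sum_mul_exp_eq_zero _ _ hmoment).subset fun β hβ => ?_
  rw [Set.mem_ofPred_eq, ← hdiff fun t => Real.exp (β * t), ← hH.exp_smul_apply_self,
    ← hH.exp_smul_apply_self, ← matrixExp_eq_exp, hβ i j, sub_self]
end
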